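/- arXiv:2109.05546 — 3 statements merged into one kernel-verified Lean document; each statement's English description precedes it below -/
import Mathlib

section
/- Let Λ ∈ ℝ^{d×d} be symmetric positive definite, let φ₁,…,φ_n, x ∈ ℝ^d, and suppose Λ ⪰ Σ_{τ=1}^n φ_τ φ_τᵀ (i.e., Λ - Σ φ_τφ_τᵀ is positive semidefinite). Then Σ_{τ=1}^n |xᵀ Λ⁻¹ φ_τ| ≤ √(n · xᵀ Λ⁻¹ x). -/
open Matrix Finset

/-
With y = Λ⁻¹x, each term is |⟨y, φ_τ⟩|. Cauchy–Schwarz bounds the sum of n such terms by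
√(n Σ ⟨y, φ_τ⟩²), and Σ ⟨y, φ_τ⟩² = yᵀ(Σ φ_τφ_τᵀ)y ≤ yᵀΛy = xᵀΛ⁻¹x by the domination hypothesis.
-/

theorem Finset.sum_abs_le_sqrt_card_mul_sum_sq {ι : Type*} (s : Finset ι) (f : ι → ℝ) :
    ∑ i ∈ s, |f i| ≤ √(#s * ∑ i ∈ s, f i ^ 2) := by
  rw [Real.le_sqrt (sum_nonneg fun i _ => abs_nonneg (f i)) (by positivity)]
  simpa only [sq_abs] using sq_sum_le_card_mul_sum_sq (s := s) (f := fun i => |f i|)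

namespace Matrix

variable {m ι : Type*} [Fintype m]

theorem IsSymm.dotProduct_mulVec_comm {α : Type*} [CommSemiring α] {A : Matrix m m α}
    (hA : A.IsSymm) (x y : m → α) : x ⬝ᵥ (A *ᵥ y) = (A *ᵥ x) ⬝ᵥ y := by
  rw [dotProduct_mulVec, ← mulVec_transpose, hA.eq]

theorem dotProduct_sum_vecMulVec_self_mulVec {α : Type*} [CommSemiring α] (s : Finset ι)
    (φ : ι → m → α) (y : m → α) :
    y ⬝ᵥ ((∑ τ ∈ s, vecMulVec (φ τ) (φ τ)) *ᵥ y) = ∑ τ ∈ s, (φ τ ⬝ᵥ y) ^ 2 := by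
  rw [sum_mulVec, dotProduct_sum]
  refine sum_congr rfl fun τ _ => ?_
  rw [vecMulVec_mulVec, op_smul_eq_smul, dotProduct_smul, smul_eq_mul, dotProduct_comm y, sq]

theorem PosSemidef.dotProduct_mulVec_le_of_sub {A B : Matrix m m ℝ} (h : (A - B).PosSemidef)
    (y : m → ℝ) : y ⬝ᵥ (B *ᵥ y) ≤ y ⬝ᵥ (A *ᵥ y) := by
  have := h.dotProduct_mulVec_nonneg y
  rw [star_trivial, sub_mulVec, dotProduct_sub] at this
  linarith

end Matrix

theorem stmt_3 {d n : ℕ} (Λ : Matrix (Fin d) (Fin d) ℝ) (hΛ : Λ.PosDef)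
    (φ : Fin n → Fin d → ℝ) (x : Fin d → ℝ)
    (hdom : (Λ - ∑ τ : Fin n, vecMulVec (φ τ) (φ τ)).PosSemidef) :
    ∑ τ : Fin n, |x ⬝ᵥ (Λ⁻¹ *ᵥ φ τ)| ≤ Real.sqrt (n * (x ⬝ᵥ (Λ⁻¹ *ᵥ x))) := by
  set y := Λ⁻¹ *ᵥ x
  have hsymm : Λ⁻¹.IsSymm := isHermitian_iff_isSymm.mp hΛ.isHermitian.inv
  have hΛy : Λ *ᵥ y = x := by
    rw [mulVec_mulVec, mul_nonsing_inv _ hΛ.det_pos.ne'.isUnit, one_mulVec]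
  have hquad : ∑ τ, (φ τ ⬝ᵥ y) ^ 2 ≤ x ⬝ᵥ y := by
    rw [← dotProduct_sum_vecMulVec_self_mulVec, dotProduct_comm x, ← hΛy]
    exact hdom.dotProduct_mulVec_le_of_sub y
  calc ∑ τ, |x ⬝ᵥ (Λ⁻¹ *ᵥ φ τ)| = ∑ τ, |φ τ ⬝ᵥ y| := by
        refine sum_congr rfl fun τ _ => ?_
        rw [hsymm.dotProduct_mulVec_comm, dotProduct_comm]
    _ ≤ √(n * ∑ τ, (φ τ ⬝ᵥ y) ^ 2) := by
        simpa using sum_abs_le_sqrt_card_mul_sum_sq univ fun τ => φ τ ⬝ᵥ y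
    _ ≤ √(n * (x ⬝ᵥ y)) := by gcongr
end

section
/- Let d ≥ 1 and n ≥ 0 be natural numbers and l ≥ 1 a natural number. If n ≤ 2^{2l+3} d log(1 + n/(16d)), then n ≤ 40 · 4^l · d · l. -/
/-!
From `log (1 + x) ≤ 2 √x` the hypothesis `y ≤ a log (1 + y / b)` first gives the crude bound
`y ≤ 4 a² / b`. Feeding it back into the logarithm gives `y ≤ a log (1 + 4 (a / b)²)`, and for
`a = 2^(2l+3) d`, `b = 16 d` this is `n ≤ 2^(2l+3) d log (1 + 2^(4l)) ≤ 2^(2l+3) d (4l + 1)`.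
-/

open Real

lemma Real.sqrt_add_le_add_sqrt {x y : ℝ} (hx : 0 ≤ x) (hy : 0 ≤ y) :
    √(x + y) ≤ √x + √y :=
  (sqrt_le_left (by positivity)).2 <| by
    nlinarith [sq_sqrt hx, sq_sqrt hy, sqrt_nonneg x, sqrt_nonneg y]

lemma Real.log_one_add_le_two_mul_sqrt {x : ℝ} (hx : 0 ≤ x) : log (1 + x) ≤ 2 * √x := by
  have hpos : 0 < 1 + x := by linarith
  have h := log_le_sub_one_of_pos (sqrt_pos.2 hpos)
  rw [log_sqrt hpos.le] at h
  linarith [sqrt_add_le_add_sqrt zero_le_one hx, sqrt_one]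

lemma le_four_mul_sq_of_le_mul_log_one_add {c x : ℝ} (hx : 0 ≤ x)
    (h : x ≤ c * log (1 + x)) : x ≤ 4 * c ^ 2 := by
  have hlog : c * log (1 + x) ≤ |c| * (2 * √x) :=
    (mul_le_mul_of_nonneg_right (le_abs_self c) (log_nonneg (by linarith))).trans
      (mul_le_mul_of_nonneg_left (log_one_add_le_two_mul_sqrt hx) (abs_nonneg c))
  -- with `s = √x`: `4c² - s² = (2|c| - s)² + 2 (2|c| s - s²)`
  nlinarith [sq_sqrt hx, sqrt_nonneg x, sq_abs c, sq_nonneg (2 * |c| - √x)]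

lemma le_mul_log_one_add_four_mul_sq {a b y : ℝ} (ha : 0 ≤ a) (hb : 0 < b) (hy : 0 ≤ y)
    (h : y ≤ a * log (1 + y / b)) : y ≤ a * log (1 + 4 * (a / b) ^ 2) := by
  have hscaled : y / b ≤ a / b * log (1 + y / b) := by
    rw [div_mul_eq_mul_div]; gcongr
  have hcrude := le_four_mul_sq_of_le_mul_log_one_add (by positivity) hscaled
  exact h.trans (by gcongr)

lemma Real.log_one_add_two_pow_le (k : ℕ) : log (1 + 2 ^ k) ≤ k + 1 := calc
  log (1 + 2 ^ k) ≤ log (2 ^ (k + 1)) := by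
    gcongr
    rw [pow_succ]
    linarith [one_le_pow₀ (n := k) (one_le_two (α := ℝ))]
  _ = (k + 1) * log 2 := by rw [log_pow]; push_cast; ring
  _ ≤ k + 1 := by
    nlinarith [log_le_sub_one_of_pos (zero_lt_two (α := ℝ)), log_nonneg (one_le_two (α := ℝ))]

theorem stmt_5 (d n l : ℕ) (hd : 1 ≤ d) (hl : 1 ≤ l)
    (h : (n : ℝ) ≤ 2 ^ (2 * l + 3) * d * Real.log (1 + n / (16 * d))) :
    (n : ℝ) ≤ 40 * 4 ^ l * d * l := by
  have hd_pos : (0 : ℝ) < d := by exact_mod_cast hd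
  have hl_one : (1 : ℝ) ≤ l := by exact_mod_cast hl
  have hratio : 4 * ((2 : ℝ) ^ (2 * l + 3) * d / (16 * d)) ^ 2 = 2 ^ (4 * l) := by
    field_simp
    ring
  have hboot := le_mul_log_one_add_four_mul_sq (by positivity) (by positivity) n.cast_nonneg h
  rw [hratio] at hboot
  calc (n : ℝ) ≤ 2 ^ (2 * l + 3) * d * log (1 + 2 ^ (4 * l)) := hboot
    _ ≤ 2 ^ (2 * l + 3) * d * (5 * l) := by
      gcongr
      have hlog := log_one_add_two_pow_le (4 * l)
      push_cast at hlog
      linarith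
    _ = 40 * 4 ^ l * d * l := by rw [pow_add, pow_mul]; ring
end

section
/- Let Λ = λI + Σ_{τ=1}^n φ_τφ_τᵀ be positive definite with λ > 0, let x ∈ ℝ^d, and let Δ_τ ∈ ℝ satisfy |Δ_τ| ≤ ε for all τ. Then |xᵀ Λ⁻¹ Σ_{τ=1}^n φ_τ Δ_τ| ≤ ε √(n · xᵀΛ⁻¹x). -/
/-! With `y = Λ⁻¹ x` the left side is `|∑ Δ_τ ⟪φ_τ, y⟫| ≤ ε ∑ |⟪φ_τ, y⟫| ≤ ε √(n ∑ ⟪φ_τ, y⟫²)` by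
Cauchy–Schwarz, and `∑ ⟪φ_τ, y⟫² ≤ yᵀ Λ y = xᵀ Λ⁻¹ x` because `Λ - ∑ φ_τ φ_τᵀ = λ I` is positive
semidefinite. -/

open Matrix Finset

variable {m ι : Type*} [Fintype m] [Fintype ι]

theorem dotProduct_sum_vecMulVec_mulVec {R : Type*} [CommRing R] (φ : ι → m → R) (v : m → R) :
    v ⬝ᵥ ((∑ τ, vecMulVec (φ τ) (φ τ)) *ᵥ v) = ∑ τ, (φ τ ⬝ᵥ v) ^ 2 := by
  simp only [sum_mulVec, dotProduct_sum, vecMulVec_mulVec, op_smul_eq_smul, dotProduct_smul,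
    smul_eq_mul, sq, dotProduct_comm v (φ _)]

variable [DecidableEq m]

theorem posDef_smul_one_add_sum_vecMulVec {lam : ℝ} (hlam : 0 < lam) (φ : ι → m → ℝ) :
    (lam • 1 + ∑ τ, vecMulVec (φ τ) (φ τ)).PosDef :=
  (PosDef.one.smul hlam).add_posSemidef <|
    posSemidef_sum _ fun τ _ => by simpa using posSemidef_vecMulVec_self_star (φ τ)

theorem sum_sq_dotProduct_le_dotProduct_mulVec {lam : ℝ} (hlam : 0 ≤ lam) (φ : ι → m → ℝ)
    (v : m → ℝ) :
    ∑ τ, (φ τ ⬝ᵥ v) ^ 2 ≤ v ⬝ᵥ ((lam • 1 + ∑ τ, vecMulVec (φ τ) (φ τ)) *ᵥ v) := by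
  rw [add_mulVec, dotProduct_add, dotProduct_sum_vecMulVec_mulVec, smul_mulVec, one_mulVec,
    dotProduct_smul, smul_eq_mul, le_add_iff_nonneg_left]
  exact mul_nonneg hlam (dotProduct_self_star_nonneg v)

theorem abs_sum_mul_le_of_abs_le_of_sum_sq_le {Δ a : ι → ℝ} {ε B : ℝ} (hΔ : ∀ τ, |Δ τ| ≤ ε)
    (ha : ∑ τ, a τ ^ 2 ≤ B) :
    |∑ τ, Δ τ * a τ| ≤ ε * √(Fintype.card ι * B) := by
  rcases isEmpty_or_nonempty ι with _ | ⟨⟨τ₀⟩⟩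
  · simp
  · have hε : 0 ≤ ε := (abs_nonneg _).trans (hΔ τ₀)
    have hcs : (∑ τ, |a τ|) ^ 2 ≤ Fintype.card ι * ∑ τ, a τ ^ 2 := by
      simpa [sq_abs] using sum_mul_sq_le_sq_mul_sq univ (fun _ => (1 : ℝ)) (fun τ => |a τ|)
    calc |∑ τ, Δ τ * a τ| ≤ ∑ τ, ε * |a τ| :=
          (abs_sum_le_sum_abs _ _).trans <| sum_le_sum fun τ _ => by
            rw [abs_mul]; exact mul_le_mul_of_nonneg_right (hΔ τ) (abs_nonneg _)
      _ = ε * √((∑ τ, |a τ|) ^ 2) := by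
          rw [← mul_sum, Real.sqrt_sq (sum_nonneg fun τ _ => abs_nonneg _)]
      _ ≤ ε * √(Fintype.card ι * B) := by gcongr; exact hcs.trans (by gcongr)

theorem dotProduct_inv_mulVec_comm {M : Matrix m m ℝ} (hM : M.PosDef) (x v : m → ℝ) :
    x ⬝ᵥ (M⁻¹ *ᵥ v) = v ⬝ᵥ (M⁻¹ *ᵥ x) := by
  rw [dotProduct_mulVec, ← vecMul_transpose, ← conjTranspose_eq_transpose_of_trivial,
    hM.inv.isHermitian.eq, dotProduct_comm]

theorem stmt_13_general {d n : ℕ} (lam : ℝ) (hlam : 0 < lam)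
    (φ : Fin n → Fin d → ℝ) (Δ : Fin n → ℝ) (ε : ℝ)
    (hΔ : ∀ τ, |Δ τ| ≤ ε)
    (Λ : Matrix (Fin d) (Fin d) ℝ)
    (hΛdef : Λ = lam • 1 + ∑ τ : Fin n, vecMulVec (φ τ) (φ τ))
    (x : Fin d → ℝ) :
    |x ⬝ᵥ (Λ⁻¹ *ᵥ (∑ τ : Fin n, Δ τ • φ τ))| ≤ ε * Real.sqrt (n * (x ⬝ᵥ (Λ⁻¹ *ᵥ x))) := by
  have hΛ : Λ.PosDef := hΛdef ▸ posDef_smul_one_add_sum_vecMulVec hlam φ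
  have hquad : ∑ τ, (φ τ ⬝ᵥ (Λ⁻¹ *ᵥ x)) ^ 2 ≤ x ⬝ᵥ (Λ⁻¹ *ᵥ x) := by
    simpa only [← hΛdef, mulVec_mulVec, mul_nonsing_inv _ hΛ.det_pos.ne'.isUnit,
      one_mulVec, dotProduct_comm _ x] using
      sum_sq_dotProduct_le_dotProduct_mulVec hlam.le φ (Λ⁻¹ *ᵥ x)
  have hlhs : x ⬝ᵥ (Λ⁻¹ *ᵥ ∑ τ, Δ τ • φ τ) = ∑ τ, Δ τ * (φ τ ⬝ᵥ (Λ⁻¹ *ᵥ x)) := by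
    rw [dotProduct_inv_mulVec_comm hΛ, sum_dotProduct]
    simp only [smul_dotProduct, smul_eq_mul]
  simpa only [hlhs, Fintype.card_fin] using abs_sum_mul_le_of_abs_le_of_sum_sq_le hΔ hquad

theorem stmt_13 {d n : ℕ} (lam : ℝ) (hlam : 0 < lam)
    (φ : Fin n → Fin d → ℝ) (Δ : Fin n → ℝ) (ε : ℝ)
    (hΔ : ∀ τ, |Δ τ| ≤ ε)
    (Λ : Matrix (Fin d) (Fin d) ℝ)
    (hΛdef : Λ = lam • 1 + ∑ τ : Fin n, vecMulVec (φ τ) (φ τ))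
    (hΛ : Λ.PosDef) (x : Fin d → ℝ) :
    |x ⬝ᵥ (Λ⁻¹ *ᵥ (∑ τ : Fin n, Δ τ • φ τ))| ≤ ε * Real.sqrt (n * (x ⬝ᵥ (Λ⁻¹ *ᵥ x))) :=
  stmt_13_general lam hlam φ Δ ε hΔ Λ hΛdef x
end
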